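/- With P and N defined as above, P(s,t) ≥ N(s,t) for all s ≥ 1, t ≥ 2. -/

import Mathlib

/-- `P s t` is the infimum, over all finite nonempty graphs `G` with no clique of size
`t`, of the probability that `s` independently uniformly chosen vertices of `G` form an
independent set. -/
noncomputable def P (s t : ℕ) : ℝ :=
  sInf {p : ℝ | ∃ (V : Type) (_ : Fintype V) (_ : Nonempty V) (G : SimpleGraph V),
    G.CliqueFree t ∧
    p = (Nat.card {f : Fin s → V // ∀ i j, ¬ G.Adj (f i) (f j)} : ℝ) /
          (Nat.card V : ℝ) ^ s}


/-- The function `N(s,t)`: `N(s,t) = 1` if `s ≤ 1` or `t ≤ 2`, and otherwise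
`N(s,t) = min_{x ∈ [0,1]} max (x^s N(s,t-1)) ((1-x)^{s-1} N(s-1,t))`
(the minimum written as an infimum, which is attained by continuity). -/
noncomputable def N : ℕ → ℕ → ℝ
  | 0, _ => 1
  | 1, _ => 1
  | _ + 2, 0 => 1
  | _ + 2, 1 => 1
  | _ + 2, 2 => 1
  | s + 2, t + 3 => sInf {y : ℝ | ∃ x ∈ Set.Icc (0 : ℝ) 1,
      y = max (x ^ (s + 2) * N (s + 2) (t + 2)) ((1 - x) ^ (s + 1) * N (s + 1) (t + 3))}
  termination_by s t => (s, t)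

/-!
Count independent `s`-tuples of a `K_t`-free graph `G` on `n` vertices with maximum degree `Δ`.
Sorting them by their first entry `v`, the other `s - 1` entries form an independent tuple in the
non-neighbourhood of `v`, a `K_t`-free graph on at least `n - Δ` vertices; and every independent
`s`-tuple of the neighbourhood of a vertex of degree `Δ`, a `K_{t-1}`-free graph, is one of `G`.
By induction on `(s, t)` the number of tuples is therefore at least
`max (x ^ s N(s,t-1)) ((1 - x) ^ (s-1) N(s-1,t)) n ^ s ≥ N(s,t) n ^ s` with `x = Δ / n`.
-/

namespace SimpleGraph

variable {V : Type*} (G : SimpleGraph V)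

noncomputable def indepTupleCount (s : ℕ) : ℕ :=
  Nat.card {f : Fin s → V // ∀ i j, ¬ G.Adj (f i) (f j)}

@[simp]
theorem indepTupleCount_one : G.indepTupleCount 1 = Nat.card V :=
  Nat.card_congr <| (Equiv.subtypeUnivEquiv fun f i j =>
    Subsingleton.elim i j ▸ G.loopless.irrefl (f i)).trans (Equiv.funUnique (Fin 1) V)

@[simp]
theorem indepTupleCount_bot (s : ℕ) :
    (⊥ : SimpleGraph V).indepTupleCount s = Nat.card V ^ s := by
  simp [indepTupleCount, Nat.card_fun]

theorem indepTupleCount_induce_le [Finite V] (W : Set V) (s : ℕ) :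
    (G.induce W).indepTupleCount s ≤ G.indepTupleCount s :=
  Nat.card_le_card_of_injective (fun g => ⟨fun i => g.1 i, g.2⟩) fun _ _ h =>
    Subtype.ext <| funext fun i => Subtype.ext <| congrFun (congrArg Subtype.val h) i

theorem forall_not_adj_cons_iff {s : ℕ} (v : V) (g : Fin s → V) :
    (∀ i j, ¬ G.Adj (Fin.cons (α := fun _ => V) v g i) (Fin.cons (α := fun _ => V) v g j)) ↔
      (∀ i, ¬ G.Adj v (g i)) ∧ ∀ i j, ¬ G.Adj (g i) (g j) := by
  simp [Fin.forall_fin_succ, G.adj_comm, forall_and]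

def indepTupleConsEquiv {s : ℕ} (v : V) :
    {g : Fin s → ↥(G.neighborSet v)ᶜ //
        ∀ i j, ¬ (G.induce (G.neighborSet v)ᶜ).Adj (g i) (g j)} ≃
      {f : {f : Fin (s + 1) → V // ∀ i j, ¬ G.Adj (f i) (f j)} // f.1 0 = v} where
  toFun g := ⟨⟨Fin.cons v fun i => g.1 i,
    (G.forall_not_adj_cons_iff v _).2 ⟨fun i => (g.1 i).2, g.2⟩⟩, rfl⟩
  invFun f := ⟨fun i => ⟨f.1.1 i.succ, by obtain ⟨f, rfl⟩ := f; exact f.2 0 i.succ⟩,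
    fun i j => f.1.2 i.succ j.succ⟩
  left_inv g := by ext; simp
  right_inv f := by
    ext i
    cases i using Fin.cases <;> simp [f.2]

theorem indepTupleCount_succ [Fintype V] (s : ℕ) :
    G.indepTupleCount (s + 1) =
      ∑ v, (G.induce (G.neighborSet v)ᶜ).indepTupleCount s := by
  rw [indepTupleCount, ← Nat.card_congr (Equiv.sigmaFiberEquiv fun f => f.1 0), Nat.card_sigma]
  exact Finset.sum_congr rfl fun v _ => (Nat.card_congr (G.indepTupleConsEquiv v)).symm

theorem CliqueFree.induce_neighborSet {G : SimpleGraph V} {t : ℕ} (hG : G.CliqueFree (t + 1))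
    (v : V) : (G.induce (G.neighborSet v)).CliqueFree t :=
  (cliqueFree_induce_iff _ _ _).2 <| by
    simpa using (CliqueFree.cliqueFreeOn G hG).of_succ G (Set.mem_univ v)

-- The witness is `x = Δ / |V|`, where `Δ` is the maximum degree of `G`.
theorem exists_max_mul_card_pow_le_indepTupleCount [Fintype V] {s : ℕ} {a b : ℝ} (hb : 0 ≤ b)
    (hnbhd : ∀ v, a * (Nat.card (G.neighborSet v) : ℝ) ^ (s + 1) ≤
      (G.induce (G.neighborSet v)).indepTupleCount (s + 1))
    (hnonnbhd : ∀ v, b * (Nat.card ↥(G.neighborSet v)ᶜ : ℝ) ^ s ≤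
      (G.induce (G.neighborSet v)ᶜ).indepTupleCount s) :
    ∃ x ∈ Set.Icc (0 : ℝ) 1,
      max (x ^ (s + 1) * a) ((1 - x) ^ s * b) * (Nat.card V : ℝ) ^ (s + 1) ≤
        G.indepTupleCount (s + 1) := by
  rcases isEmpty_or_nonempty V with hV | hV
  · exact ⟨0, by simp, by simp⟩
  obtain ⟨v₀, hv₀⟩ := Finite.exists_max fun v => Nat.card (G.neighborSet v)
  set n : ℝ := (Nat.card V : ℝ)
  set D : ℝ := (Nat.card (G.neighborSet v₀) : ℝ)
  have hn : 0 < n := Nat.cast_pos.2 Nat.card_pos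
  have hcompl (v : V) :
      (Nat.card (G.neighborSet v) : ℝ) + Nat.card ↥(G.neighborSet v)ᶜ = n := by
    simp only [n, Nat.card_coe_set_eq]
    exact_mod_cast Set.ncard_add_ncard_compl (G.neighborSet v)
  have hDn : D ≤ n := by
    linarith [hcompl v₀, (Nat.card ↥(G.neighborSet v₀)ᶜ).cast_nonneg (α := ℝ)]
  refine ⟨D / n, ⟨by positivity, div_le_one_of_le₀ hDn hn.le⟩, ?_⟩
  rw [max_mul_of_nonneg _ _ (by positivity)]
  refine max_le ?_ ?_
  · calc (D / n) ^ (s + 1) * a * n ^ (s + 1) = a * D ^ (s + 1) := by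
          rw [div_pow]
          field_simp
      _ ≤ (G.induce (G.neighborSet v₀)).indepTupleCount (s + 1) := hnbhd v₀
      _ ≤ G.indepTupleCount (s + 1) := by exact_mod_cast G.indepTupleCount_induce_le _ _
  · calc (1 - D / n) ^ s * b * n ^ (s + 1) = n * (b * (n - D) ^ s) := by
          rw [one_sub_div hn.ne', div_pow]
          field_simp
          ring
      _ = ∑ _v : V, b * (n - D) ^ s := by
          simp [n, Nat.card_eq_fintype_card]
      _ ≤ ∑ v, b * (Nat.card ↥(G.neighborSet v)ᶜ : ℝ) ^ s := by
          gcongr with v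
          have : (Nat.card (G.neighborSet v) : ℝ) ≤ D := Nat.cast_le.2 (hv₀ v)
          linarith [hcompl v]
      _ ≤ ∑ v, ((G.induce (G.neighborSet v)ᶜ).indepTupleCount s : ℝ) :=
          Finset.sum_le_sum fun v _ => hnonnbhd v
      _ = G.indepTupleCount (s + 1) := by
          rw [indepTupleCount_succ]
          push_cast
          rfl

end SimpleGraph

open SimpleGraph

theorem N_one (t : ℕ) : N 1 t = 1 := by simp [N]

theorem N_two (s : ℕ) : N s 2 = 1 := by
  rcases s with _ | _ | s <;> simp [N]

theorem N_nonneg : ∀ s t, 0 ≤ N s t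
  | 0, _ | 1, _ | _ + 2, 0 | _ + 2, 1 | _ + 2, 2 => by simp [N]
  | s + 2, t + 3 => by
    rw [N]
    refine le_csInf ⟨_, 0, by simp, rfl⟩ ?_
    rintro y ⟨x, hx, rfl⟩
    exact le_max_of_le_left (mul_nonneg (pow_nonneg hx.1 _) (N_nonneg _ _))

theorem N_le_max (s t : ℕ) {x : ℝ} (hx : x ∈ Set.Icc (0 : ℝ) 1) :
    N (s + 2) (t + 3) ≤
      max (x ^ (s + 2) * N (s + 2) (t + 2)) ((1 - x) ^ (s + 1) * N (s + 1) (t + 3)) := by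
  rw [N]
  refine csInf_le ⟨0, ?_⟩ ⟨x, hx, rfl⟩
  rintro y ⟨z, hz, rfl⟩
  exact le_max_of_le_left (mul_nonneg (pow_nonneg hz.1 _) (N_nonneg _ _))

theorem N_mul_card_pow_le_indepTupleCount :
    ∀ (s t : ℕ) {V : Type*} [Finite V] (G : SimpleGraph V), G.CliqueFree (t + 2) →
      N (s + 1) (t + 2) * (Nat.card V : ℝ) ^ (s + 1) ≤ G.indepTupleCount (s + 1)
  | 0, t, V, _, G, _ => by simp [N_one]
  | s + 1, 0, V, _, G, hG => by
    rw [cliqueFree_two] at hG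
    subst hG
    simp [N_two]
  | s + 1, t + 1, V, _, G, hG => by
    have := Fintype.ofFinite V
    obtain ⟨x, hx, hcount⟩ := G.exists_max_mul_card_pow_le_indepTupleCount (N_nonneg _ _)
      (fun v => N_mul_card_pow_le_indepTupleCount (s + 1) t _ (hG.induce_neighborSet v))
      (fun v => N_mul_card_pow_le_indepTupleCount s (t + 1) _
        ((cliqueFree_induce_iff _ _ _).2 (CliqueFree.cliqueFreeOn G hG)))
    exact (mul_le_mul_of_nonneg_right (N_le_max s t hx) (by positivity)).trans hcount

/-- `P(s,t) ≥ N(s,t)` for all `s ≥ 1`, `t ≥ 2`. -/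
theorem stmt_16 (s t : ℕ) (hs : 1 ≤ s) (ht : 2 ≤ t) : N s t ≤ P s t := by
  obtain ⟨s, rfl⟩ := Nat.exists_eq_add_of_le' hs
  obtain ⟨t, rfl⟩ := Nat.exists_eq_add_of_le' ht
  refine le_csInf
    ⟨_, Unit, inferInstance, inferInstance, ⊥, cliqueFree_bot (by omega), rfl⟩ ?_
  rintro p ⟨V, _, _, G, hG, rfl⟩
  rw [le_div_iff₀ (pow_pos (Nat.cast_pos.2 Nat.card_pos) _)]
  exact N_mul_card_pow_le_indepTupleCount s t G hG
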